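/- Let u(r) = (1+r²)^{-(α-2m+1)/2} with α - 2m + 1 > 0. Then for each j = 1, …, m: (-Δ_α)^j u (r) = (1+r²)^{-(α-2m+1+4j)/2} ∑_{i=0}^{j} G(i,j) r^{2i}, where G(i,j) = 2^i C(j,i) K_j D(i,j) E(i,j) with K_j = ∏_{h=0}^{j-1}(α-2m+1+2h), D(i,j) = ∏_{h=j-i+1}^{j}(m-h) (D(0,j)=1), E(i,j) = ∏_{h=i}^{j-1}(α+1+2h) (E(j,j)=1). -/

import Mathlib

/-- The α-generalized radial Laplacian: Δ_α v(r) = v''(r) + (α/r) v'(r). -/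
noncomputable def lapl (α : ℝ) (v : ℝ → ℝ) : ℝ → ℝ :=
  fun r => deriv (deriv v) r + (α / r) * deriv v r

/-- The j-fold iterate of -Δ_α. -/
noncomputable def negLaplIter (α : ℝ) (j : ℕ) : (ℝ → ℝ) → (ℝ → ℝ) :=
  (fun v r => -(lapl α v r))^[j]

/-- D(i,j) = ∏_{h=j-i+1}^{j} (m-h) for 0 ≤ i ≤ j, 0 otherwise. -/
noncomputable def Dfun (m : ℕ) (i j : ℕ) : ℝ :=
  if i ≤ j then ∏ h ∈ Finset.Icc (j - i + 1) j, ((m : ℝ) - h) else 0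

/-- E(i,j) = ∏_{h=i}^{j-1} (α+1+2h) for 0 ≤ i ≤ j, 0 otherwise. -/
noncomputable def Efun (α : ℝ) (i j : ℕ) : ℝ :=
  if i ≤ j then ∏ h ∈ Finset.Ico i j, (α + 1 + 2 * (h : ℝ)) else 0

/-- K_j = ∏_{h=0}^{j-1} (α-2m+1+2h). -/
noncomputable def Kfun (α : ℝ) (m : ℕ) (j : ℕ) : ℝ :=
  ∏ h ∈ Finset.range j, (α - 2 * m + 1 + 2 * (h : ℝ))

/-- G(i,j) = 2^i C(j,i) K_j D(i,j) E(i,j). -/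
noncomputable def Gfun (α : ℝ) (m : ℕ) (i j : ℕ) : ℝ :=
  2 ^ i * (j.choose i) * Kfun α m j * Dfun m i j * Efun α i j

namespace S15

open Finset

noncomputable def FF (c : ℝ) (n : ℕ) : ℝ → ℝ := fun r => (1 + r ^ 2) ^ c * r ^ n

lemma hFF (c : ℝ) (n : ℕ) (r : ℝ) :
    HasDerivAt (FF c n) (2 * c * FF (c - 1) (n + 1) r + (n : ℝ) * FF c (n - 1) r) r := by
  have h1 : HasDerivAt (fun r : ℝ => 1 + r ^ 2) (2 * r) r := by
    simpa using ((hasDerivAt_pow 2 r).const_add 1)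
  have h2 : HasDerivAt (fun r : ℝ => (1 + r ^ 2) ^ c) ((2 * r) * c * (1 + r ^ 2) ^ (c - 1)) r :=
    h1.rpow_const (Or.inl (by positivity))
  have h3 := h2.fun_mul (hasDerivAt_pow n r)
  refine h3.congr_deriv ?_
  unfold FF
  rcases n with _ | s
  · simp; ring
  · simp only [Nat.add_sub_cancel]
    push_cast
    ring

noncomputable def D2 (c : ℝ) (i : ℕ) : ℝ → ℝ := fun r =>
  2 * c * (2 * (c - 1) * FF (c - 1 - 1) (2 * i + 1 + 1) r
      + ((2 * i + 1 : ℕ) : ℝ) * FF (c - 1) (2 * i + 1 - 1) r)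
    + ((2 * i : ℕ) : ℝ) * (2 * c * FF (c - 1) (2 * i - 1 + 1) r
      + ((2 * i - 1 : ℕ) : ℝ) * FF c (2 * i - 1 - 1) r)

noncomputable def D1 (c : ℝ) (i : ℕ) : ℝ → ℝ := fun r =>
  2 * c * FF (c - 1) (2 * i + 1) r + ((2 * i : ℕ) : ℝ) * FF c (2 * i - 1) r

lemma lapl_sum (α c : ℝ) (G : ℕ → ℝ) (N : ℕ) (r : ℝ) :
    lapl α (fun r => ∑ i ∈ range N, G i * FF c (2 * i) r) r
      = ∑ i ∈ range N, G i * (D2 c i r + (α / r) * D1 c i r) := by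
  have hW1 : ∀ x : ℝ, HasDerivAt (fun r => ∑ i ∈ range N, G i * FF c (2 * i) r)
      (∑ i ∈ range N, G i * D1 c i x) x := by
    intro x
    exact HasDerivAt.fun_sum fun i _ => ((hFF c (2 * i) x).const_mul (G i))
  have hd1 : deriv (fun r => ∑ i ∈ range N, G i * FF c (2 * i) r)
      = fun x => ∑ i ∈ range N, G i * D1 c i x := funext fun x => (hW1 x).deriv
  have hW2 : ∀ x : ℝ, HasDerivAt (fun x => ∑ i ∈ range N, G i * D1 c i x)
      (∑ i ∈ range N, G i * D2 c i x) x := by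
    intro x
    refine HasDerivAt.fun_sum fun i _ => HasDerivAt.const_mul (G i) ?_
    exact ((hFF (c - 1) (2 * i + 1) x).const_mul (2 * c)).add
      ((hFF c (2 * i - 1) x).const_mul ((2 * i : ℕ) : ℝ))
  unfold lapl
  rw [hd1, (hW2 r).deriv, Finset.mul_sum, ← Finset.sum_add_distrib]
  exact Finset.sum_congr rfl fun i _ => by ring

noncomputable def A0 (α : ℝ) (i : ℕ) : ℝ := 2 * i * (α + 2 * i - 1)
noncomputable def A1 (α c : ℝ) (i : ℕ) : ℝ := 2 * (1 + α) * (c + 2 * i) + 8 * i * (c + i - 1)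
noncomputable def A2 (α c : ℝ) (i : ℕ) : ℝ := 2 * (c + i) * (α + 2 * c + 2 * i - 1)
noncomputable def cP (α : ℝ) (m j : ℕ) : ℝ := -((α - 2 * m + 1 + 4 * j) / 2)

lemma per_i (α c : ℝ) (r : ℝ) (hr : r ≠ 0) (i : ℕ) :
    D2 c i r + (α / r) * D1 c i r
    = (1 + r ^ 2) ^ (c - 2) * (A2 α c i * r ^ (2 * i + 2) + A1 α c i * r ^ (2 * i)
        + A0 α i * r ^ (2 * i - 2)) := by
  have hb : (0:ℝ) < 1 + r ^ 2 := by positivity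
  have e1 : (1 + r ^ 2 : ℝ) ^ (c - 1) = (1 + r ^ 2) ^ (c - 2) * (1 + r ^ 2) := by
    rw [show c - 1 = (c - 2) + 1 by ring, Real.rpow_add hb, Real.rpow_one]
  have e0 : (1 + r ^ 2 : ℝ) ^ c = (1 + r ^ 2) ^ (c - 2) * ((1 + r ^ 2) * (1 + r ^ 2)) := by
    rw [show c = (c - 2) + 1 + 1 by ring, Real.rpow_add hb, Real.rpow_add hb, Real.rpow_one]; ring
  have e2 : c - 1 - 1 = c - 2 := by ring
  rcases i with _ | s
  · unfold D2 D1 FF A0 A1 A2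
    norm_num [e2, e1, e0]
    field_simp
    ring_nf
  · unfold D2 D1 FF A0 A1 A2
    simp only [e2, show 2*(s+1)+1+1 = 2*s+4 from by omega, show 2*(s+1)+1-1 = 2*s+2 from by omega,
      show 2*(s+1)-1+1 = 2*s+2 from by omega, show 2*(s+1)-1-1 = 2*s+2-2 from by omega,
      show 2*(s+1)+1 = 2*s+3 from by omega, show (2*(s+1)-1 : ℕ) = 2*s+1 from by omega,
      show 2*(s+1)+2 = 2*s+4 from by omega, show 2*(s+1) = 2*s+2 from by omega,
      show 2*(s+1)-2 = 2*s from by omega, show 2*s+2-2 = 2*s from by omega]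
    rw [e1, e0]
    push_cast
    field_simp
    ring

lemma prod_Icc_bot (f : ℕ → ℝ) {a b : ℕ} (h : a ≤ b) :
    ∏ x ∈ Icc a b, f x = f a * ∏ x ∈ Icc (a + 1) b, f x := by
  rw [← Finset.Ico_add_one_right_eq_Icc, ← Finset.Ico_add_one_right_eq_Icc, Finset.prod_eq_prod_Ico_succ_bot (by omega)]

lemma Gfun_zero (α : ℝ) (m : ℕ) {i j : ℕ} (h : j < i) : Gfun α m i j = 0 := by
  unfold Gfun
  rw [Nat.choose_eq_zero_of_lt h]
  simp

lemma hKsucc (α : ℝ) (m j : ℕ) :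
    Kfun α m (j + 1) = Kfun α m j * (α - 2 * m + 1 + 2 * j) := by
  unfold Kfun; rw [Finset.prod_range_succ]

lemma ID0 (α : ℝ) (m : ℕ) (j : ℕ) :
    Gfun α m 0 (j + 1)
      = -(A1 α (cP α m j) 0 * Gfun α m 0 j + A0 α 1 * Gfun α m 1 j) := by
  have hD0 : ∀ n, Dfun m 0 n = 1 := by
    intro n; unfold Dfun
    rw [if_pos (Nat.zero_le _), Finset.Icc_eq_empty (by omega), Finset.prod_empty]
  rcases j with _ | t
  · rw [Gfun_zero α m (show (0:ℕ) < 1 by omega)]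
    unfold Gfun A1 cP Efun Kfun
    rw [hD0, hD0]
    norm_num [Finset.prod_range_succ]
    ring
  · set j := t + 1 with hj
    have hE0j1 : Efun α 0 (j + 1)
        = (α + 1) * ((∏ h ∈ Ico 1 j, (α + 1 + 2 * (h : ℝ))) * (α + 1 + 2 * j)) := by
      unfold Efun
      rw [if_pos (Nat.zero_le _), Finset.prod_eq_prod_Ico_succ_bot (by omega),
        Finset.prod_Ico_succ_top (by omega)]
      norm_num
    have hE0 : Efun α 0 j = (α + 1) * ∏ h ∈ Ico 1 j, (α + 1 + 2 * (h : ℝ)) := by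
      unfold Efun
      rw [if_pos (Nat.zero_le _), Finset.prod_eq_prod_Ico_succ_bot (by omega)]
      norm_num
    have hE1 : Efun α 1 j = ∏ h ∈ Ico 1 j, (α + 1 + 2 * (h : ℝ)) := by
      unfold Efun; rw [if_pos (by omega)]
    have hD1 : Dfun m 1 j = (m : ℝ) - j := by
      unfold Dfun
      rw [if_pos (by omega), show j - 1 + 1 = j from by omega, Finset.Icc_self,
        Finset.prod_singleton]
    unfold Gfun
    rw [hKsucc, hD0, hD0, hE0j1, hE0, hE1, hD1, Nat.choose_one_right,
      Nat.choose_zero_right, Nat.choose_zero_right]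
    unfold A0 A1 cP
    push_cast
    ring

lemma IDS (α : ℝ) (m : ℕ) (j k : ℕ) (hkj : k ≤ j) :
    Gfun α m (k + 1) (j + 1)
      = -(A2 α (cP α m j) k * Gfun α m k j
          + A1 α (cP α m j) (k + 1) * Gfun α m (k + 1) j
          + A0 α (k + 2) * Gfun α m (k + 2) j) := by
  rcases (by omega : k = j ∨ k + 1 = j ∨ k + 2 ≤ j) with h | h | h
  · -- k = j
    subst h
    rw [Gfun_zero α m (show k < k + 1 by omega), Gfun_zero α m (show k < k + 2 by omega)]
    have hDnew : Dfun m (k + 1) (k + 1)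
        = (∏ h ∈ Icc 1 k, ((m : ℝ) - h)) * ((m : ℝ) - (k + 1)) := by
      unfold Dfun
      rw [if_pos le_rfl, show k + 1 - (k + 1) + 1 = 1 from by omega,
        Finset.prod_Icc_succ_top (by omega)]
      push_cast; ring
    have hDk : Dfun m k k = ∏ h ∈ Icc 1 k, ((m : ℝ) - h) := by
      unfold Dfun
      rw [if_pos le_rfl, show k - k + 1 = 1 from by omega]
    have hEself : ∀ n, Efun α n n = 1 := by
      intro n; unfold Efun; rw [if_pos le_rfl, Finset.Ico_self, Finset.prod_empty]
    unfold Gfun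
    rw [hKsucc, hDnew, hDk, hEself, hEself, Nat.choose_self, Nat.choose_self]
    unfold A2 cP
    push_cast
    ring
  · -- k + 1 = j
    subst h
    rw [Gfun_zero α m (show k + 1 < k + 2 by omega)]
    have hDnew : Dfun m (k + 1) (k + 1 + 1)
        = (∏ h ∈ Icc 2 (k + 1), ((m : ℝ) - h)) * ((m : ℝ) - (k + 2)) := by
      unfold Dfun
      rw [if_pos (by omega), show k + 1 + 1 - (k + 1) + 1 = 2 from by omega,
        Finset.prod_Icc_succ_top (by omega)]
      push_cast; ring
    have hDk : Dfun m k (k + 1) = ∏ h ∈ Icc 2 (k + 1), ((m : ℝ) - h) := by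
      unfold Dfun
      rw [if_pos (by omega), show k + 1 - k + 1 = 2 from by omega]
    have hDk1 : Dfun m (k + 1) (k + 1)
        = ((m : ℝ) - 1) * ∏ h ∈ Icc 2 (k + 1), ((m : ℝ) - h) := by
      unfold Dfun
      rw [if_pos le_rfl, show k + 1 - (k + 1) + 1 = 1 from by omega,
        prod_Icc_bot _ (by omega)]
      norm_num
    have hEnew : Efun α (k + 1) (k + 1 + 1) = α + 1 + 2 * ((k : ℝ) + 1) := by
      unfold Efun
      rw [if_pos (by omega), Nat.Ico_succ_singleton, Finset.prod_singleton]
      push_cast; ring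
    have hEk : Efun α k (k + 1) = α + 1 + 2 * (k : ℝ) := by
      unfold Efun
      rw [if_pos (by omega), Nat.Ico_succ_singleton, Finset.prod_singleton]
    have hEself : Efun α (k + 1) (k + 1) = 1 := by
      unfold Efun; rw [if_pos le_rfl, Finset.Ico_self, Finset.prod_empty]
    unfold Gfun
    rw [hKsucc, hDnew, hDk, hDk1, hEnew, hEk, hEself,
      Nat.choose_succ_self_right, Nat.choose_succ_self_right, Nat.choose_self]
    unfold A1 A2 cP
    push_cast
    ring
  · -- k + 2 ≤ j : generic case
    have hjk : ((j - k : ℕ) : ℝ) = (j : ℝ) - k := by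
      rw [Nat.cast_sub (by omega)]
    have hjk1 : ((j - k - 1 : ℕ) : ℝ) = (j : ℝ) - k - 1 := by
      rw [show j - k - 1 = j - (k + 1) from by omega, Nat.cast_sub (by omega)]
      push_cast; ring
    have hc1 : ((j.choose (k + 1) : ℕ) : ℝ) = (j.choose k : ℝ) * ((j : ℝ) - k) / (k + 1) := by
      have h0 := congrArg (Nat.cast : ℕ → ℝ) (Nat.choose_succ_right_eq j k)
      push_cast at h0
      rw [hjk] at h0
      field_simp
      linarith
    have hc2 : ((j.choose (k + 2) : ℕ) : ℝ)
        = (j.choose (k + 1) : ℝ) * ((j : ℝ) - k - 1) / (k + 2) := by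
      have h0 := congrArg (Nat.cast : ℕ → ℝ) (Nat.choose_succ_right_eq j (k + 1))
      push_cast at h0
      rw [show j - (k + 1) = j - k - 1 from by omega, hjk1] at h0
      field_simp
      linarith [h0]
    have hPascal : (((j + 1).choose (k + 1) : ℕ) : ℝ)
        = (j.choose k : ℝ) + (j.choose (k + 1) : ℝ) := by
      rw [Nat.choose_succ_succ]
      push_cast; ring
    set P : ℝ := ∏ h ∈ Icc (j - k + 1) j, ((m : ℝ) - h) with hP
    set Q2 : ℝ := ∏ h ∈ Ico (k + 2) j, (α + 1 + 2 * (h : ℝ)) with hQ2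
    have hDnew : Dfun m (k + 1) (j + 1) = P * ((m : ℝ) - (j + 1)) := by
      unfold Dfun
      rw [if_pos (by omega), show j + 1 - (k + 1) + 1 = j - k + 1 from by omega,
        Finset.prod_Icc_succ_top (by omega)]
      push_cast; ring
    have hDk : Dfun m k j = P := by
      unfold Dfun; rw [if_pos (by omega)]
    have hDk1 : Dfun m (k + 1) j = ((m : ℝ) - ((j : ℝ) - k)) * P := by
      unfold Dfun
      rw [if_pos (by omega), show j - (k + 1) + 1 = j - k from by omega,
        prod_Icc_bot _ (by omega), hjk]
    have hDk2 : Dfun m (k + 2) j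
        = ((m : ℝ) - ((j : ℝ) - k - 1)) * (((m : ℝ) - ((j : ℝ) - k)) * P) := by
      unfold Dfun
      rw [if_pos (by omega), show j - (k + 2) + 1 = j - k - 1 from by omega,
        prod_Icc_bot _ (by omega), show j - k - 1 + 1 = j - k from by omega,
        prod_Icc_bot _ (by omega), hjk, hjk1]
    have hEk : Efun α k j = (α + 1 + 2 * (k : ℝ)) * ((α + 1 + 2 * ((k : ℝ) + 1)) * Q2) := by
      unfold Efun
      rw [if_pos (by omega), Finset.prod_eq_prod_Ico_succ_bot (by omega),
        Finset.prod_eq_prod_Ico_succ_bot (show k + 1 < j from by omega)]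
      push_cast; ring
    have hEk1 : Efun α (k + 1) j = (α + 1 + 2 * ((k : ℝ) + 1)) * Q2 := by
      unfold Efun
      rw [if_pos (by omega), Finset.prod_eq_prod_Ico_succ_bot (show k + 1 < j from by omega)]
      push_cast; ring
    have hEk2 : Efun α (k + 2) j = Q2 := by
      unfold Efun; rw [if_pos (by omega)]
    have hEnew : Efun α (k + 1) (j + 1)
        = ((α + 1 + 2 * ((k : ℝ) + 1)) * Q2) * (α + 1 + 2 * (j : ℝ)) := by
      unfold Efun
      rw [if_pos (by omega), Finset.prod_Ico_succ_top (by omega),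
        Finset.prod_eq_prod_Ico_succ_bot (show k + 1 < j from by omega)]
      push_cast; ring
    unfold Gfun
    rw [hKsucc, hDnew, hDk, hDk1, hDk2, hEk, hEk1, hEk2, hEnew, hPascal, hc2, hc1]
    unfold A0 A1 A2 cP
    have hk1 : ((k : ℝ) + 1) ≠ 0 := by positivity
    have hk2 : ((k : ℝ) + 2) ≠ 0 := by positivity
    field_simp
    push_cast
    ring

lemma sum_step (α : ℝ) (m : ℕ) (j : ℕ) (r : ℝ) :
    ∑ k ∈ range (j + 2), Gfun α m k (j + 1) * r ^ (2 * k)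
      = -∑ i ∈ range (j + 1), Gfun α m i j *
          (A2 α (cP α m j) i * r ^ (2 * i + 2) + A1 α (cP α m j) i * r ^ (2 * i)
            + A0 α i * r ^ (2 * i - 2)) := by
  set c := cP α m j with hc
  have hz1 : Gfun α m (j + 1) j = 0 := Gfun_zero α m (by omega)
  have hz2 : Gfun α m (j + 2) j = 0 := Gfun_zero α m (by omega)
  have hA00 : A0 α 0 = 0 := by simp [A0]
  have hL : ∑ k ∈ range (j + 2), Gfun α m k (j + 1) * r ^ (2 * k)
      = (∑ k ∈ range (j + 1),
          -((A2 α c k * Gfun α m k j + A1 α c (k + 1) * Gfun α m (k + 1) j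
              + A0 α (k + 2) * Gfun α m (k + 2) j) * r ^ (2 * k + 2)))
        + -(A1 α c 0 * Gfun α m 0 j + A0 α 1 * Gfun α m 1 j) := by
    rw [Finset.sum_range_succ']
    congr 1
    · refine Finset.sum_congr rfl fun k hk => ?_
      have hkj : k ≤ j := by simp at hk; omega
      rw [IDS α m j k hkj, show 2 * (k + 1) = 2 * k + 2 from by omega]
      ring
    · rw [ID0 α m j, ← hc]
      norm_num
  have hS1 : ∑ i ∈ range (j + 1), Gfun α m i j * (A1 α c i * r ^ (2 * i))
      = A1 α c 0 * Gfun α m 0 j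
        + ∑ k ∈ range (j + 1), A1 α c (k + 1) * Gfun α m (k + 1) j * r ^ (2 * k + 2) := by
    rw [Finset.sum_range_succ' (fun i => Gfun α m i j * (A1 α c i * r ^ (2 * i)))]
    rw [Finset.sum_range_succ (fun k => A1 α c (k + 1) * Gfun α m (k + 1) j * r ^ (2 * k + 2))]
    rw [hz1]
    have he : ∑ i ∈ range j, Gfun α m (i + 1) j * (A1 α c (i + 1) * r ^ (2 * (i + 1)))
        = ∑ i ∈ range j, A1 α c (i + 1) * Gfun α m (i + 1) j * r ^ (2 * i + 2) := by
      refine Finset.sum_congr rfl fun i _ => ?_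
      rw [show 2 * (i + 1) = 2 * i + 2 from by omega]
      ring
    rw [he]
    norm_num
    ring
  have hS0 : ∑ i ∈ range (j + 1), Gfun α m i j * (A0 α i * r ^ (2 * i - 2))
      = A0 α 1 * Gfun α m 1 j
        + ∑ k ∈ range (j + 1), A0 α (k + 2) * Gfun α m (k + 2) j * r ^ (2 * k + 2) := by
    rw [Finset.sum_range_succ' (fun i => Gfun α m i j * (A0 α i * r ^ (2 * i - 2)))]
    have he : ∑ i ∈ range j, Gfun α m (i + 1) j * (A0 α (i + 1) * r ^ (2 * (i + 1) - 2))
        = ∑ i ∈ range j, A0 α (i + 1) * Gfun α m (i + 1) j * r ^ (2 * i) := by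
      refine Finset.sum_congr rfl fun i _ => ?_
      rw [show 2 * (i + 1) - 2 = 2 * i from by omega]
      ring
    rw [he, hA00]
    have hext : ∑ i ∈ range j, A0 α (i + 1) * Gfun α m (i + 1) j * r ^ (2 * i)
        = ∑ i ∈ range (j + 2), A0 α (i + 1) * Gfun α m (i + 1) j * r ^ (2 * i) := by
      rw [Finset.sum_range_succ, Finset.sum_range_succ, hz1, hz2]
      ring
    rw [hext, Finset.sum_range_succ' (fun i => A0 α (i + 1) * Gfun α m (i + 1) j * r ^ (2 * i))
      (j + 1)]
    have he2 : ∑ i ∈ range (j + 1), A0 α (i + 1 + 1) * Gfun α m (i + 1 + 1) j * r ^ (2 * (i + 1))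
        = ∑ k ∈ range (j + 1), A0 α (k + 2) * Gfun α m (k + 2) j * r ^ (2 * k + 2) := by
      refine Finset.sum_congr rfl fun i _ => ?_
      rw [show 2 * (i + 1) = 2 * i + 2 from by omega, show i + 1 + 1 = i + 2 from by omega]
    rw [he2]
    norm_num
    ring
  have hsplit : ∑ i ∈ range (j + 1), Gfun α m i j *
        (A2 α c i * r ^ (2 * i + 2) + A1 α c i * r ^ (2 * i) + A0 α i * r ^ (2 * i - 2))
      = ∑ i ∈ range (j + 1), (A2 α c i * Gfun α m i j * r ^ (2 * i + 2)
          + (Gfun α m i j * (A1 α c i * r ^ (2 * i))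
            + Gfun α m i j * (A0 α i * r ^ (2 * i - 2)))) := by
    refine Finset.sum_congr rfl fun i _ => by ring
  rw [hL, hsplit, Finset.sum_add_distrib, Finset.sum_add_distrib, hS1, hS0]
  have hmerge : ∑ k ∈ range (j + 1),
        -((A2 α c k * Gfun α m k j + A1 α c (k + 1) * Gfun α m (k + 1) j
            + A0 α (k + 2) * Gfun α m (k + 2) j) * r ^ (2 * k + 2))
      = -(∑ k ∈ range (j + 1), A2 α c k * Gfun α m k j * r ^ (2 * k + 2))
        + (-(∑ k ∈ range (j + 1), A1 α c (k + 1) * Gfun α m (k + 1) j * r ^ (2 * k + 2))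
          + -(∑ k ∈ range (j + 1), A0 α (k + 2) * Gfun α m (k + 2) j * r ^ (2 * k + 2))) := by
    rw [← Finset.sum_neg_distrib, ← Finset.sum_neg_distrib, ← Finset.sum_neg_distrib, ← Finset.sum_add_distrib,
      ← Finset.sum_add_distrib]
    exact Finset.sum_congr rfl fun k _ => by ring
  rw [hmerge]
  ring

lemma key (α : ℝ) (m : ℕ) : ∀ j : ℕ, ∀ r : ℝ, 0 < r →
    negLaplIter α j (fun r : ℝ => (1 + r ^ 2) ^ (-((α - 2 * (m : ℝ) + 1) / 2))) r =
      (1 + r ^ 2) ^ (-((α - 2 * (m : ℝ) + 1 + 4 * (j : ℝ)) / 2)) *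
        ∑ i ∈ Finset.range (j + 1), Gfun α m i j * r ^ (2 * i) := by
  intro j
  induction j with
  | zero =>
    intro r hr
    unfold negLaplIter
    simp [Gfun, Kfun, Dfun, Efun]
  | succ j ih =>
    intro r hr
    have hrne : r ≠ 0 := ne_of_gt hr
    set u : ℝ → ℝ := fun r : ℝ => (1 + r ^ 2) ^ (-((α - 2 * (m : ℝ) + 1) / 2)) with hu
    have hit : negLaplIter α (j + 1) u r = -(lapl α (negLaplIter α j u) r) := by
      unfold negLaplIter
      rw [Function.iterate_succ_apply']
    rw [hit]
    set c := cP α m j with hc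
    set W : ℝ → ℝ := fun x => ∑ i ∈ range (j + 1), Gfun α m i j * FF c (2 * i) x with hW
    have hEq : negLaplIter α j u =ᶠ[nhds r] W := by
      filter_upwards [isOpen_Ioi.mem_nhds hr] with x hx
      rw [ih x hx, hW]
      simp only
      rw [Finset.mul_sum]
      refine Finset.sum_congr rfl fun i _ => ?_
      rw [hc]
      unfold FF cP
      ring
    have hlapl : lapl α (negLaplIter α j u) r = lapl α W r := by
      unfold lapl
      rw [hEq.deriv_eq, (hEq.deriv).deriv_eq]
    rw [hlapl, hW, lapl_sum α c (fun i => Gfun α m i j) (j + 1) r]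
    have hper : ∑ i ∈ range (j + 1), Gfun α m i j * (D2 c i r + (α / r) * D1 c i r)
        = (1 + r ^ 2) ^ (c - 2) * ∑ i ∈ range (j + 1), Gfun α m i j *
            (A2 α c i * r ^ (2 * i + 2) + A1 α c i * r ^ (2 * i) + A0 α i * r ^ (2 * i - 2)) := by
      rw [Finset.mul_sum]
      refine Finset.sum_congr rfl fun i _ => ?_
      rw [per_i α c r hrne i]
      ring
    rw [hper]
    have hexp : (1 + r ^ 2 : ℝ) ^ (c - 2)
        = (1 + r ^ 2) ^ (-((α - 2 * (m : ℝ) + 1 + 4 * ((j + 1 : ℕ) : ℝ)) / 2)) := by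
      rw [hc]
      unfold cP
      congr 1
      push_cast
      ring
    rw [show (j + 1 + 1) = (j + 2) from by omega, sum_step α m j r, hexp, ← hc]
    ring

end S15

theorem stmt_15 (m : ℕ) (hm : 1 ≤ m) (α : ℝ) (hα : -1 < α) (hS : α - 2 * m + 1 > 0) :
    ∀ j : ℕ, 1 ≤ j → j ≤ m → ∀ r : ℝ, 0 < r →
      negLaplIter α j (fun r : ℝ => (1 + r ^ 2) ^ (-((α - 2 * m + 1) / 2))) r =
        (1 + r ^ 2) ^ (-((α - 2 * m + 1 + 4 * j) / 2)) *
          ∑ i ∈ Finset.range (j + 1), Gfun α m i j * r ^ (2 * i) := by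
  intro j _ _ r hr
  exact S15.key α m j r hr
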